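/- Let ‖·‖ be an arbitrary norm on M_n(ℂ). Define ‖A‖_(u) := sup{∑ᵢ ‖CᵢACᵢ*‖ : ∑ᵢ Cᵢ*Cᵢ = I}. Then ‖·‖_(u) is an L-norm, ‖·‖ ≤ ‖·‖_(u), and ‖·‖_(u) is the minimum element of the class of L-norms greater than or equal to ‖·‖: for any L-norm ⦀·⦀ with ‖·‖ ≤ ⦀·⦀, one has ‖·‖_(u) ≤ ⦀·⦀. -/

import Mathlib

open Matrix BigOperators ComplexOrder

/-- Square complex matrices. -/
abbrev Mat (n : ℕ) := Matrix (Fin n) (Fin n) ℂ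

/-- `N` is a norm on `Mat n`. -/
def IsMatrixNorm {n : ℕ} (N : Mat n → ℝ) : Prop :=
  (∀ A, N A = 0 ↔ A = 0) ∧
  (∀ (c : ℂ) (A : Mat n), N (c • A) = ‖c‖ * N A) ∧
  (∀ A B : Mat n, N (A + B) ≤ N A + N B)

/-- A set of matrices is C*-convex. -/
def CStarConvex {n : ℕ} (K : Set (Mat n)) : Prop :=
  ∀ (k : ℕ) (C A : Fin k → Mat n), (∀ i, A i ∈ K) →
    (∑ i, (C i)ᴴ * C i = 1) → (∑ i, (C i)ᴴ * A i * C i) ∈ K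

/-- `N` is an M-norm. -/
def IsMNorm {n : ℕ} (N : Mat n → ℝ) : Prop :=
  ∀ (k : ℕ) (C X : Fin k → Mat n), (∑ i, (C i)ᴴ * C i = 1) →
    N (∑ i, (C i)ᴴ * X i * C i) ≤ ⨆ i, N (X i)

/-- `N` is an L-norm. -/
def IsLNorm {n : ℕ} (N : Mat n → ℝ) : Prop :=
  ∀ (k : ℕ) (C : Fin k → Mat n) (X : Mat n), (∑ i, (C i)ᴴ * C i = 1) →
    ∑ i, N (C i * X * (C i)ᴴ) ≤ N X

/-- The dual norm with respect to the pairing `⟨Y|X⟩ = Tr(Yᴴ X)`. -/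
noncomputable def dualNorm {n : ℕ} (N : Mat n → ℝ) (Y : Mat n) : ℝ :=
  sSup {r | ∃ X : Mat n, N X ≤ 1 ∧ r = ‖(Yᴴ * X).trace‖}

/-- The operator (spectral) norm of a matrix. -/
noncomputable def opNorm {n : ℕ} (A : Mat n) : ℝ :=
  ‖Matrix.toEuclideanCLM (𝕜 := ℂ) (n := Fin n) A‖

/-- The trace norm `‖A‖₁ = Tr((AᴴA)^{1/2})`. -/
noncomputable def traceNorm {n : ℕ} (A : Mat n) : ℝ :=
  ((Matrix.posSemidef_conjTranspose_mul_self A).isHermitian.eigenvectorUnitary.1 *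
    diagonal (((↑) : ℝ → ℂ) ∘ (Real.sqrt ∘ (Matrix.posSemidef_conjTranspose_mul_self A).isHermitian.eigenvalues)) *
    (star (Matrix.posSemidef_conjTranspose_mul_self A).isHermitian.eigenvectorUnitary : Mat n)).trace.re

/-- The numerical radius. -/
noncomputable def numRadius {n : ℕ} (A : Mat n) : ℝ :=
  sSup {r | ∃ x : EuclideanSpace ℂ (Fin n), ‖x‖ = 1 ∧
    r = ‖(inner ℂ x (Matrix.toEuclideanCLM (𝕜 := ℂ) (n := Fin n) A x))‖}

/-- The norm `‖A‖_(u) = sup {∑ᵢ ‖CᵢACᵢ*‖ : ∑ᵢ Cᵢ*Cᵢ = 1}`. -/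
noncomputable def uNorm {n : ℕ} (N : Mat n → ℝ) (A : Mat n) : ℝ :=
  sSup {r | ∃ (k : ℕ) (C : Fin k → Mat n), (∑ i, (C i)ᴴ * C i = 1) ∧
    r = ∑ i, N (C i * A * (C i)ᴴ)}

/-!
Composing a family `(Cᵢ)` with `∑ Cᵢᴴ Cᵢ = 1` with, for each `i`, a family `(D_{ij})_j` with the
same property gives the family `(D_{ij} Cᵢ)_{ij}`, again with `∑ (D_{ij} Cᵢ)ᴴ (D_{ij} Cᵢ) = 1`.
Hence a sum of near-optimal sums for the `‖CᵢXCᵢᴴ‖_(u)` is itself one of the sums defining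
`‖X‖_(u)`, which makes `‖·‖_(u)` an L-norm; minimality is immediate from the definitions.
The supremum is finite because `∑ ‖CᵢXCᵢᴴ‖_F ≤ ∑ ‖Cᵢ‖_F² ‖X‖_F = n ‖X‖_F` for the Frobenius
norm, which dominates any norm up to a constant.
-/

open scoped Matrix.Norms.Frobenius

open Filter Topology in
theorem Fintype.sum_le_of_forall_lt {ι : Type*} [Fintype ι] {a : ι → ℝ} {b : ℝ}
    (h : ∀ r : ι → ℝ, (∀ i, r i < a i) → ∑ i, r i ≤ b) : ∑ i, a i ≤ b := by
  have hlim : Tendsto (fun t : ℝ => ∑ i, (a i - t)) (𝓝[>] 0) (𝓝 (∑ i, (a i - 0))) :=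
    (tendsto_finsetSum _ fun i _ => tendsto_const_nhds.sub tendsto_id).mono_left
      nhdsWithin_le_nhds
  simp only [sub_zero] at hlim
  exact le_of_tendsto hlim
    (eventually_nhdsWithin_of_forall fun t ht => h _ fun i => sub_lt_self _ ht)

theorem Matrix.sum_sigma_conjTranspose_mul_self {m R ι : Type*} [Fintype m] [DecidableEq m]
    [Semiring R] [StarRing R] [Fintype ι] {κ : ι → Type*} [∀ i, Fintype (κ i)]
    {C : ι → Matrix m m R} {D : ∀ i, κ i → Matrix m m R}
    (hC : ∑ i, (C i)ᴴ * C i = 1) (hD : ∀ i, ∑ j, (D i j)ᴴ * D i j = 1) :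
    ∑ p : Σ i, κ i, (D p.1 p.2 * C p.1)ᴴ * (D p.1 p.2 * C p.1) = 1 := by
  rw [Fintype.sum_sigma, ← hC]
  refine Finset.sum_congr rfl fun i _ => ?_
  calc ∑ j, (D i j * C i)ᴴ * (D i j * C i) = ∑ j, (C i)ᴴ * ((D i j)ᴴ * D i j) * C i := by
        simp only [conjTranspose_mul, mul_assoc]
    _ = (C i)ᴴ * C i := by rw [← Finset.sum_mul, ← Finset.mul_sum, hD i, mul_one]

section Frobenius

variable {m n α : Type*} [Fintype m] [Fintype n]

theorem Matrix.frobenius_norm_sq [SeminormedAddCommGroup α] (A : Matrix m n α) :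
    ‖A‖ ^ 2 = ∑ i, ∑ j, ‖A i j‖ ^ 2 := by
  rw [frobenius_norm_def, ← Real.sqrt_eq_rpow, Real.sq_sqrt (by positivity)]
  simp only [Real.rpow_two]

theorem Matrix.norm_entry_le_frobenius_norm [SeminormedAddCommGroup α] (A : Matrix m n α)
    (i : m) (j : n) : ‖A i j‖ ≤ ‖A‖ := by
  refine (pow_le_pow_iff_left₀ (norm_nonneg _) (norm_nonneg _) two_ne_zero).1 ?_
  rw [frobenius_norm_sq]
  calc ‖A i j‖ ^ 2 ≤ ∑ j', ‖A i j'‖ ^ 2 :=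
        Finset.single_le_sum (f := fun j' => ‖A i j'‖ ^ 2) (fun _ _ => by positivity)
          (Finset.mem_univ j)
    _ ≤ ∑ i', ∑ j', ‖A i' j'‖ ^ 2 :=
        Finset.single_le_sum (f := fun i' => ∑ j', ‖A i' j'‖ ^ 2) (fun _ _ => by positivity)
          (Finset.mem_univ i)

theorem Matrix.trace_conjTranspose_mul_self_eq_frobenius_norm_sq {𝕜 : Type*} [RCLike 𝕜]
    (A : Matrix m n 𝕜) : (Aᴴ * A).trace = ((‖A‖ ^ 2 : ℝ) : 𝕜) := by
  simp only [trace, diag_apply, mul_apply, conjTranspose_apply, RCLike.star_def, RCLike.conj_mul,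
    frobenius_norm_sq, RCLike.ofReal_sum, RCLike.ofReal_pow]
  exact Finset.sum_comm

theorem Matrix.sum_frobenius_norm_sq_of_sum_conjTranspose_mul_self {𝕜 ι : Type*} [RCLike 𝕜]
    [Fintype ι] [DecidableEq n] {C : ι → Matrix m n 𝕜} (hC : ∑ i, (C i)ᴴ * C i = 1) :
    ∑ i, ‖C i‖ ^ 2 = Fintype.card n := by
  have h := congrArg trace hC
  simp only [trace_sum, trace_conjTranspose_mul_self_eq_frobenius_norm_sq, trace_one] at h
  exact_mod_cast h

end Frobenius

namespace IsMatrixNorm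

variable {n : ℕ} {N : Mat n → ℝ}

theorem map_zero (hN : IsMatrixNorm N) : N 0 = 0 := (hN.1 0).2 rfl

theorem nonneg (hN : IsMatrixNorm N) (A : Mat n) : 0 ≤ N A :=
  apply_nonneg (Seminorm.of (𝕜 := ℂ) N hN.2.2 hN.2.1) A

theorem sum_le (hN : IsMatrixNorm N) {ι : Type*} (s : Finset ι) (f : ι → Mat n) :
    N (∑ i ∈ s, f i) ≤ ∑ i ∈ s, N (f i) :=
  Finset.le_sum_of_subadditive N hN.map_zero.le hN.2.2 s f

theorem le_mul_frobenius_norm (hN : IsMatrixNorm N) (A : Mat n) :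
    N A ≤ (∑ j, ∑ l, N (single j l 1)) * ‖A‖ := by
  calc N A = N (∑ j, ∑ l, A j l • single j l (1 : ℂ)) := by
        simp only [smul_single, smul_eq_mul, mul_one, ← matrix_eq_sum_single]
    _ ≤ ∑ j, ∑ l, ‖A j l‖ * N (single j l 1) :=
        (hN.sum_le _ _).trans <| Finset.sum_le_sum fun j _ =>
          (hN.sum_le _ _).trans_eq <| by simp only [hN.2.1]
    _ ≤ ∑ j, ∑ l, ‖A‖ * N (single j l 1) := by
        gcongr with j _ l _
        · exact hN.nonneg _
        · exact norm_entry_le_frobenius_norm A j l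
    _ = (∑ j, ∑ l, N (single j l 1)) * ‖A‖ := by
        rw [mul_comm]; simp only [Finset.mul_sum]

theorem sum_apply_mul_mul_conjTranspose_le (hN : IsMatrixNorm N) {ι : Type*} [Fintype ι]
    {C : ι → Mat n} (hC : ∑ i, (C i)ᴴ * C i = 1) (X : Mat n) :
    ∑ i, N (C i * X * (C i)ᴴ) ≤ (∑ j, ∑ l, N (single j l 1)) * (n * ‖X‖) := by
  set c := ∑ j, ∑ l, N (single j l 1)
  have hc : 0 ≤ c := Finset.sum_nonneg fun j _ => Finset.sum_nonneg fun l _ => hN.nonneg _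
  calc ∑ i, N (C i * X * (C i)ᴴ) ≤ ∑ i, c * (‖C i‖ ^ 2 * ‖X‖) := by
        refine Finset.sum_le_sum fun i _ => (hN.le_mul_frobenius_norm _).trans ?_
        refine mul_le_mul_of_nonneg_left ?_ hc
        calc ‖C i * X * (C i)ᴴ‖ ≤ ‖C i‖ * ‖X‖ * ‖(C i)ᴴ‖ :=
              (frobenius_norm_mul _ _).trans <|
                mul_le_mul_of_nonneg_right (frobenius_norm_mul _ _) (norm_nonneg _)
          _ = ‖C i‖ ^ 2 * ‖X‖ := by rw [frobenius_norm_conjTranspose]; ring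
    _ = c * (n * ‖X‖) := by
        rw [← Finset.mul_sum, ← Finset.sum_mul,
          sum_frobenius_norm_sq_of_sum_conjTranspose_mul_self hC, Fintype.card_fin]

end IsMatrixNorm

section uNorm

variable {n : ℕ} {N : Mat n → ℝ}

def uNormSums (N : Mat n → ℝ) (A : Mat n) : Set ℝ :=
  {r | ∃ (k : ℕ) (C : Fin k → Mat n), (∑ i, (C i)ᴴ * C i = 1) ∧ r = ∑ i, N (C i * A * (C i)ᴴ)}

theorem uNormSums_nonempty (A : Mat n) : (uNormSums N A).Nonempty :=
  ⟨_, 1, fun _ => 1, by simp, rfl⟩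

theorem IsMatrixNorm.bddAbove_uNormSums (hN : IsMatrixNorm N) (A : Mat n) :
    BddAbove (uNormSums N A) :=
  ⟨_, fun _ ⟨_, _, hC, hr⟩ => hr ▸ hN.sum_apply_mul_mul_conjTranspose_le hC A⟩

theorem IsMatrixNorm.sum_le_uNorm (hN : IsMatrixNorm N) {ι : Type*} [Fintype ι]
    {C : ι → Mat n} (hC : ∑ i, (C i)ᴴ * C i = 1) (A : Mat n) :
    ∑ i, N (C i * A * (C i)ᴴ) ≤ uNorm N A := by
  let e := (Fintype.equivFin ι).symm
  exact le_csSup (hN.bddAbove_uNormSums A)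
    ⟨_, fun i => C (e i), by rwa [e.sum_comp fun i => (C i)ᴴ * C i],
      (e.sum_comp fun i => N (C i * A * (C i)ᴴ)).symm⟩

theorem IsMatrixNorm.le_uNorm (hN : IsMatrixNorm N) (A : Mat n) : N A ≤ uNorm N A := by
  simpa using hN.sum_le_uNorm (C := fun _ : Unit => 1) (by simp) A

theorem uNorm_le {A : Mat n} {b : ℝ}
    (h : ∀ (k : ℕ) (C : Fin k → Mat n), ∑ i, (C i)ᴴ * C i = 1 → ∑ i, N (C i * A * (C i)ᴴ) ≤ b) :
    uNorm N A ≤ b :=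
  csSup_le (uNormSums_nonempty A) fun _ ⟨k, C, hC, hr⟩ => hr ▸ h k C hC

theorem exists_lt_sum_of_lt_uNorm {A : Mat n} {r : ℝ} (hr : r < uNorm N A) :
    ∃ (k : ℕ) (C : Fin k → Mat n), ∑ i, (C i)ᴴ * C i = 1 ∧ r < ∑ i, N (C i * A * (C i)ᴴ) := by
  obtain ⟨_, ⟨k, C, hC, rfl⟩, hlt⟩ := exists_lt_of_lt_csSup (uNormSums_nonempty A) hr
  exact ⟨k, C, hC, hlt⟩

theorem IsMatrixNorm.isLNorm_uNorm (hN : IsMatrixNorm N) : IsLNorm (uNorm N) := by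
  intro k C X hC
  refine Fintype.sum_le_of_forall_lt fun r hr => ?_
  choose m D hD hrD using fun i => exists_lt_sum_of_lt_uNorm (hr i)
  calc ∑ i, r i ≤ ∑ i, ∑ j, N (D i j * (C i * X * (C i)ᴴ) * (D i j)ᴴ) :=
        Finset.sum_le_sum fun i _ => (hrD i).le
    _ = ∑ p : Σ i, Fin (m i), N (D p.1 p.2 * C p.1 * X * (D p.1 p.2 * C p.1)ᴴ) := by
        simp only [Fintype.sum_sigma, conjTranspose_mul, mul_assoc]
    _ ≤ uNorm N X := hN.sum_le_uNorm (sum_sigma_conjTranspose_mul_self hC hD) X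

theorem uNorm_le_of_isLNorm {N' : Mat n → ℝ} (hL : IsLNorm N') (hle : ∀ A, N A ≤ N' A)
    (A : Mat n) : uNorm N A ≤ N' A :=
  uNorm_le fun k C hC => (Finset.sum_le_sum fun _ _ => hle _).trans (hL k C A hC)

end uNorm

theorem uNorm_min_LNorm {n : ℕ} (N : Mat n → ℝ) (hN : IsMatrixNorm N) :
    IsLNorm (uNorm N) ∧ (∀ A, N A ≤ uNorm N A) ∧
    ∀ N' : Mat n → ℝ, IsMatrixNorm N' → IsLNorm N' → (∀ A, N A ≤ N' A) →
      ∀ A, uNorm N A ≤ N' A :=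
  ⟨hN.isLNorm_uNorm, hN.le_uNorm, fun _ _ hL hle => uNorm_le_of_isLNorm hL hle⟩
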